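/- Let φ ∈ L²(ℝ², ℍ) be a nonzero quaternion window function and f ∈ L²(ℝ², ℍ) with x_k f ∈ L²(ℝ², ℍ) for a fixed k ∈ {1,2}. Then ∥φ∥₂² · ∫_{ℝ²} x_k² |f(x)|² dx = ∫_{ℝ²} ∫_{ℝ²} x_k² |f(x) (φ(x − b))̄ |² dx db, where f(x)(φ(x−b))̄ is the inverse two-sided QFT (in the variable x) of G_φ f(·, b). -/

import Mathlib

open MeasureTheory Real

noncomputable section

/-- The quaternion exponential `e^{iθ} = cos θ + i sin θ`. -/
def expI (θ : ℝ) : Quaternion ℝ := ⟨Real.cos θ, Real.sin θ, 0, 0⟩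

/-- The quaternion exponential `e^{jθ} = cos θ + j sin θ`. -/
def expJ (θ : ℝ) : Quaternion ℝ := ⟨Real.cos θ, 0, Real.sin θ, 0⟩

/-- The two-sided quaternionic Fourier transform
`F_q f (ω) = ∫ e^{-2π i x₁ ω₁} f(x) e^{-2π j x₂ ω₂} dx`. -/
def QFT (f : ℝ × ℝ → Quaternion ℝ) (ω : ℝ × ℝ) : Quaternion ℝ :=
  ∫ x : ℝ × ℝ, expI (-(2 * π * x.1 * ω.1)) * f x * expJ (-(2 * π * x.2 * ω.2))

/-- The two-sided Gabor quaternionic Fourier transform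
`G_φ f (ω, b) = ∫ e^{-2π i x₁ ω₁} f(x) conj(φ(x - b)) e^{-2π j x₂ ω₂} dx`. -/
def GQFT (φ f : ℝ × ℝ → Quaternion ℝ) (ω b : ℝ × ℝ) : Quaternion ℝ :=
  ∫ x : ℝ × ℝ,
    expI (-(2 * π * x.1 * ω.1)) * (f x * star (φ (x - b))) * expJ (-(2 * π * x.2 * ω.2))

/-- The `k`-th coordinate of a point of `ℝ²`. -/
def coord : Fin 2 → ℝ × ℝ → ℝ
  | 0 => Prod.fst
  | 1 => Prod.snd

/-- The `k`-th standard basis direction of `ℝ²`. -/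
def dirv : Fin 2 → ℝ × ℝ
  | 0 => (1, 0)
  | 1 => (0, 1)

/-- The Euclidean norm on `ℝ²`. -/
def euclNorm (x : ℝ × ℝ) : ℝ := Real.sqrt (x.1 ^ 2 + x.2 ^ 2)

/-!
Since `|f(x) conj(φ(x - b))| = |f(x)| |φ(x - b)|`, the right-hand side is the integral over `b` of
the convolution of `x ↦ x_k² |f(x)|²` with `x ↦ |φ(-x)|²`, and the integral of a convolution of
two integrable functions is the product of their integrals.
-/

theorem integral_integral_mul_comp_sub {𝕜 G : Type*} [RCLike 𝕜] [AddGroup G] [MeasurableSpace G]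
    [MeasurableAdd₂ G] [MeasurableNeg G] {μ : Measure G} [SFinite μ] [μ.IsAddRightInvariant]
    [μ.IsNegInvariant] {g ψ : G → 𝕜} (hg : Integrable g μ) (hψ : Integrable ψ μ) :
    ∫ b, ∫ x, g x * ψ (x - b) ∂μ ∂μ = (∫ x, g x ∂μ) * ∫ x, ψ x ∂μ := by
  have h := integral_convolution (ContinuousLinearMap.mul 𝕜 𝕜) hg hψ.comp_neg
  simpa only [convolution_def, ContinuousLinearMap.mul_apply', neg_sub,
    integral_neg_eq_self ψ μ] using h

theorem MeasureTheory.MemLp.integrable_norm_sq {α E : Type*} [MeasurableSpace α] {μ : Measure α}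
    [NormedAddCommGroup E] {f : α → E} (hf : MemLp f 2 μ) :
    Integrable (fun x => ‖f x‖ ^ 2) μ :=
  hf.integrable_norm_pow (p := 2) two_ne_zero

theorem gqft_moment_identity_general (φ f : ℝ × ℝ → Quaternion ℝ)
    (hφ : MemLp φ 2 volume) (k : Fin 2)
    (hxf : MemLp (fun x : ℝ × ℝ => coord k x • f x) 2 volume) :
    (∫ x : ℝ × ℝ, ‖φ x‖ ^ 2) * ∫ x : ℝ × ℝ, coord k x ^ 2 * ‖f x‖ ^ 2 =
      ∫ b : ℝ × ℝ, ∫ x : ℝ × ℝ, coord k x ^ 2 * ‖f x * star (φ (x - b))‖ ^ 2 := by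
  have hmoment : Integrable (fun x => coord k x ^ 2 * ‖f x‖ ^ 2) := by
    simpa only [norm_smul, mul_pow, Real.norm_eq_abs, sq_abs] using hxf.integrable_norm_sq
  simp_rw [norm_mul, norm_star, mul_pow, ← mul_assoc]
  rw [integral_integral_mul_comp_sub hmoment hφ.integrable_norm_sq, mul_comm]

/-- `‖φ‖₂² ∫ x_k² |f(x)|² dx = ∫∫ x_k² |f(x) conj(φ(x-b))|² dx db`, where
`f(x) conj(φ(x-b))` is the inverse two-sided QFT in `x` of `G_φ f(·, b)`. -/
theorem gqft_moment_identity (φ f : ℝ × ℝ → Quaternion ℝ)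
    (hφ : MemLp φ 2 volume) (hφ0 : φ ≠ 0) (hf : MemLp f 2 volume) (k : Fin 2)
    (hxf : MemLp (fun x : ℝ × ℝ => coord k x • f x) 2 volume) :
    (∫ x : ℝ × ℝ, ‖φ x‖ ^ 2) * ∫ x : ℝ × ℝ, coord k x ^ 2 * ‖f x‖ ^ 2 =
      ∫ b : ℝ × ℝ, ∫ x : ℝ × ℝ, coord k x ^ 2 * ‖f x * star (φ (x - b))‖ ^ 2 :=
  gqft_moment_identity_general φ f hφ k hxf
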